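/- Let A be the BCK-algebra on {0,1,...,n} (a chain) with x·y = 0 if x ≤ y and x·y = x otherwise. Then for this algebra, the k-th term of the lower central series is {0,1,...,n−k} for 1 ≤ k ≤ n; in particular A is nilpotent of class exactly n. -/

import Mathlib

/-- x ∧ y := y·(y·x) for a binary operation. -/
def pmeet {A : Type*} (op : A → A → A) (x y : A) : A := op y (op y x)

/-- pseudo-commutator [x,y] := (x∧y)·(y∧x). -/
def pcom {A : Type*} (op : A → A → A) (x y : A) : A :=
  op (pmeet op x y) (pmeet op y x)

/-- Membership in the subalgebra generated by a subset. -/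
inductive clos {A : Type*} (op : A → A → A) (S : Set A) : A → Prop
  | base {x : A} : x ∈ S → clos op S x
  | mul {x y : A} : clos op S x → clos op S y → clos op S (op x y)

/-- Lower central series: A₀ = A, A_{k+1} = subalgebra generated by all [x,y]
with x ∈ A_k, y ∈ A; in particular A₁ is generated by all pseudo-commutators. -/
def lcs {A : Type*} (op : A → A → A) : ℕ → Set A
  | 0 => Set.univ
  | n + 1 => {a | clos op {z | ∃ x ∈ lcs op n, ∃ y : A, z = pcom op x y} a}

/-- The chain BCK-algebra on {0,1,…,n}: x·y = 0 if x ≤ y, else x. -/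
def chainOp {n : ℕ} (x y : Fin (n + 1)) : Fin (n + 1) := if x ≤ y then 0 else x

lemma pcom_chain {n : ℕ} (x y : Fin (n + 1)) :
    pcom (chainOp (n := n)) x y = if y < x then y else 0 := by
  unfold pcom pmeet chainOp
  split_ifs <;>
    simp only [Fin.le_def, Fin.lt_def, Fin.ext_iff, Fin.val_zero] at * <;> omega

lemma clos_le {n c : ℕ} {T : Set (Fin (n + 1))} (hT : ∀ x ∈ T, (x : ℕ) ≤ c)
    {a : Fin (n + 1)} (h : clos (chainOp (n := n)) T a) : (a : ℕ) ≤ c := by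
  induction h with
  | base h => exact hT _ h
  | mul hx hy ihx ihy =>
    unfold chainOp
    split
    · simp
    · exact ihx

lemma lcs_eq {n : ℕ} : ∀ k : ℕ, 1 ≤ k → k ≤ n →
    lcs (chainOp (n := n)) k = {x : Fin (n + 1) | (x : ℕ) ≤ n - k} := by
  intro k
  induction k with
  | zero => intro h; omega
  | succ k ih =>
    intro _ hk
    have hmem : ∀ a : Fin (n + 1), a ∈ lcs (chainOp (n := n)) k ↔ (a : ℕ) ≤ n - k := by
      rcases Nat.eq_zero_or_pos k with h0 | h1
      · subst h0
        intro a
        simp [lcs]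
        have := a.is_le; omega
      · intro a
        rw [ih h1 (by omega)]
        rfl
    ext x
    simp only [Set.mem_setOf_eq]
    constructor
    · intro hx
      have hx' : clos (chainOp (n := n))
          {z | ∃ a ∈ lcs (chainOp (n := n)) k, ∃ y : Fin (n+1), z = pcom (chainOp (n := n)) a y} x := hx
      refine clos_le ?_ hx'
      rintro z ⟨a, ha, y, rfl⟩
      rw [pcom_chain]
      split_ifs with h
      · have hav := (hmem a).mp ha
        have := Fin.lt_def.mp h
        omega
      · simp
    · intro hx
      have hk' : k < n := by omega
      have ha : (⟨n - k, by omega⟩ : Fin (n + 1)) ∈ lcs (chainOp (n := n)) k :=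
        (hmem _).mpr (by simp)
      have hlt : x < (⟨n - k, by omega⟩ : Fin (n + 1)) := by
        rw [Fin.lt_def]; simp; omega
      have heq : x = pcom (chainOp (n := n)) (⟨n - k, by omega⟩ : Fin (n + 1)) x := by
        rw [pcom_chain, if_pos hlt]
      exact clos.base ⟨_, ha, x, heq⟩

/-- For the chain algebra on {0,…,n}, the k-th term of the lower central series is
{0,1,…,n−k} for 1 ≤ k ≤ n; in particular the algebra is nilpotent of class
exactly n. -/
theorem chain_lcs (n : ℕ) :
    (∀ k : ℕ, 1 ≤ k → k ≤ n →
      lcs (chainOp (n := n)) k = {x : Fin (n + 1) | (x : ℕ) ≤ n - k}) ∧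
    lcs (chainOp (n := n)) n = ({0} : Set (Fin (n + 1))) ∧
    (∀ m : ℕ, m < n → lcs (chainOp (n := n)) m ≠ ({0} : Set (Fin (n + 1)))) := by
  refine ⟨fun k => lcs_eq k, ?_, ?_⟩
  · rcases Nat.eq_zero_or_pos n with h0 | h1
    · subst h0
      ext x
      simp [lcs, Fin.fin_one_eq_zero x]
    · rw [lcs_eq n h1 le_rfl]
      ext x
      simp only [Set.mem_setOf_eq, Set.mem_singleton_iff, Fin.ext_iff, Fin.val_zero, Nat.sub_self, Nat.le_zero]
  · intro m hm hcontra
    rcases Nat.eq_zero_or_pos m with h0 | h1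
    · subst h0
      have : (1 : Fin (n + 1)) ∈ ({0} : Set (Fin (n + 1))) := by
        rw [← hcontra]; trivial
      simp only [Set.mem_singleton_iff] at this
      have := Fin.ext_iff.mp this
      rw [Fin.val_one'] at this
      simp at this
      omega
    · rw [lcs_eq m h1 (le_of_lt hm)] at hcontra
      have hmem : (⟨n - m, by omega⟩ : Fin (n + 1)) ∈ {x : Fin (n + 1) | (x : ℕ) ≤ n - m} := by simp
      rw [hcontra] at hmem
      simp only [Set.mem_singleton_iff, Fin.ext_iff] at hmem
      simp at hmem
      omega
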